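/- arXiv:1602.00493 — 3 statements merged into one kernel-verified Lean document; each statement's English description precedes it below -/
import Mathlib

section
/- The function F is well-defined on nega-Q̃-rational numbers: for any n and any digits with i_n ≠ 0, the value of F computed from the representation ...i_{n-1} i_n m_{n+1} 0 m_{n+3} 0 ... equals the value computed from the representation ...i_{n-1} (i_n−1) 0 m_{n+2} 0 m_{n+4} ...; that is, β̃-series evaluated at the two digit sequences agree. -/
open Finset Filter Topology MeasureTheory

noncomputable section

/-- `rowSum p n k = Σ_{i<k} p_{i,n}` (the numbers `β_{k,n}`). -/
def rowSum (p : ℕ → ℕ → ℝ) (n k : ℕ) : ℝ := ∑ i ∈ Finset.range k, p n i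

/-- Index flip at even positions: `tw m f n i = f n i` for odd `n`, `f n (m n - i)` for even `n`. -/
def tw (m : ℕ → ℕ) (f : ℕ → ℕ → ℝ) (n i : ℕ) : ℝ :=
  if Odd n then f n i else f n (m n - i)

/-- Tail value of the (nega-)expansion determined by `f` from position `k+1` on. -/
def negaShift (m : ℕ → ℕ) (f : ℕ → ℕ → ℝ) (d : ℕ → ℕ) (k : ℕ) : ℝ :=
  ∑' j : ℕ, tw m (rowSum f) (k + j + 1) (d (k + j + 1)) *
    ∏ t ∈ Finset.Icc (k + 1) (k + j), tw m f t (d t)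

/-- The nega-expansion value: `negaVal m f d = β̃_{d₁,1} + Σ_{k≥2} β̃_{d_k,k} Π_{j<k} f̃_{d_j,j}`. -/
def negaVal (m : ℕ → ℕ) (f : ℕ → ℕ → ℝ) (d : ℕ → ℕ) : ℝ := negaShift m f d 0

/-- A digit sequence for the alphabet sizes `m`. -/
def ValidDigits (m : ℕ → ℕ) (d : ℕ → ℕ) : Prop := ∀ n, d n ≤ m n

private lemma rowSum_succ' (p : ℕ → ℕ → ℝ) (n k : ℕ) :
    rowSum p n (k + 1) = rowSum p n k + p n k := Finset.sum_range_succ _ _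

private lemma negaVal_eq (m : ℕ → ℕ) (p : ℕ → ℕ → ℝ) (d : ℕ → ℕ) :
    negaVal m p d = ∑' j : ℕ, tw m (rowSum p) (j + 1) (d (j + 1)) *
      ∏ t ∈ Finset.Icc 1 j, tw m p t (d t) := by
  simp [negaVal, negaShift]

private lemma negaVal_zero_tail (m : ℕ → ℕ) (p : ℕ → ℕ → ℝ) (d : ℕ → ℕ) (n : ℕ)
    (h : ∀ k, n < k → tw m (rowSum p) k (d k) = 0) :
    negaVal m p d = ∑ j ∈ Finset.range n, tw m (rowSum p) (j + 1) (d (j + 1)) *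
      ∏ t ∈ Finset.Icc 1 j, tw m p t (d t) := by
  rw [negaVal_eq]
  refine tsum_eq_sum fun b hb => ?_
  rw [h (b + 1) (by simp only [Finset.mem_range, not_lt] at hb; omega), zero_mul]

private lemma negaVal_full_tail (m : ℕ → ℕ) (p : ℕ → ℕ → ℝ) (d : ℕ → ℕ) (n : ℕ)
    (q : ℕ → ℝ)
    (hq : ∀ k, n < k → tw m p k (d k) = q k)
    (hb : ∀ k, n < k → tw m (rowSum p) k (d k) = 1 - q k)
    (hq01 : ∀ k, n < k → q k ∈ Set.Ioo (0 : ℝ) 1)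
    (hlim : Tendsto (fun j => ∏ t ∈ Finset.Icc (n + 1) (n + j), q t) atTop (𝓝 0)) :
    negaVal m p d = (∑ j ∈ Finset.range n, tw m (rowSum p) (j + 1) (d (j + 1)) *
      ∏ t ∈ Finset.Icc 1 j, tw m p t (d t)) + ∏ t ∈ Finset.Icc 1 n, tw m p t (d t) := by
  set F : ℕ → ℝ := fun j => tw m (rowSum p) (j + 1) (d (j + 1)) *
      ∏ t ∈ Finset.Icc 1 j, tw m p t (d t) with hF
  set P : ℕ → ℝ := fun j => ∏ t ∈ Finset.Icc (n + 1) (n + j), q t with hP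
  set C : ℝ := ∏ t ∈ Finset.Icc 1 n, tw m p t (d t) with hC
  have hP0 : P 0 = 1 := by simp [hP]
  have hPsucc : ∀ j, P (j + 1) = P j * q (n + j + 1) := by
    intro j
    simp only [hP]
    rw [show n + (j + 1) = (n + j) + 1 by ring, Finset.prod_Icc_succ_top (by omega)]
  have hPnn : ∀ j, 0 ≤ P j := by
    intro j
    refine Finset.prod_nonneg fun t ht => ?_
    exact (hq01 t (by simp only [Finset.mem_Icc] at ht; omega)).1.le
  set g : ℕ → ℝ := fun j => P j - P (j + 1) with hg
  have hg0 : ∀ j, 0 ≤ g j := by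
    intro j
    have h1 := hq01 (n + j + 1) (by omega)
    have h2 := hPnn j
    simp only [hg, hPsucc j]
    nlinarith [h1.2]
  have hpartial : ∀ N, ∑ j ∈ Finset.range N, g j = 1 - P N := by
    intro N
    simp only [hg]
    rw [Finset.sum_range_sub' P N, hP0]
  have hS : Summable g := summable_of_sum_range_le hg0
    (fun N => by rw [hpartial]; linarith [hPnn N])
  have hgsum : HasSum g 1 := by
    have h2 : Tendsto (fun N => ∑ j ∈ Finset.range N, g j) atTop (𝓝 1) := by
      simp only [hpartial]
      simpa using tendsto_const_nhds.sub hlim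
    have h3 := hS.hasSum.tendsto_sum_nat
    have h4 := tendsto_nhds_unique h3 h2
    exact h4 ▸ hS.hasSum
  have hFadd : ∀ j, F (j + n) = C * g j := by
    intro j
    have h1 := hb (j + n + 1) (by omega)
    have hsplit : ∏ t ∈ Finset.Icc 1 (j + n), tw m p t (d t) = C * P j := by
      have e1 : Finset.Icc 1 (j + n) = Finset.Ioc 0 (j + n) := Finset.Icc_add_one_left_eq_Ioc 0 _
      have e2 : Finset.Icc 1 n = Finset.Ioc 0 n := Finset.Icc_add_one_left_eq_Ioc 0 n
      have e3 : Finset.Icc (n + 1) (n + j) = Finset.Ioc n (n + j) := Finset.Icc_add_one_left_eq_Ioc n _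
      have e4 : ∏ t ∈ Finset.Ioc n (n + j), tw m p t (d t) = P j := by
        simp only [hP]
        rw [e3]
        exact Finset.prod_congr rfl fun t ht =>
          hq t (by simp only [Finset.mem_Ioc] at ht; omega)
      rw [e1, hC, e2, ← e4, show j + n = n + j by ring]
      exact (Finset.prod_Ioc_consecutive _ (Nat.zero_le n) (by omega)).symm
    show tw m (rowSum p) (j + n + 1) (d (j + n + 1)) *
        ∏ t ∈ Finset.Icc 1 (j + n), tw m p t (d t) = C * g j
    rw [h1, hsplit]
    simp only [hg, hPsucc j, show n + j + 1 = j + n + 1 by ring]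
    ring
  have hFsum : Summable F := by
    rw [← summable_nat_add_iff n]
    exact Summable.congr (hS.mul_left C) fun j => (hFadd j).symm
  have htail : ∑' j, F (j + n) = C := by
    have h5 : HasSum (fun j => F (j + n)) (C * 1) := by
      simpa only [hFadd] using hgsum.mul_left C
    rw [h5.tsum_eq, mul_one]
  rw [negaVal_eq]
  rw [show (∑' j : ℕ, tw m (rowSum p) (j + 1) (d (j + 1)) *
      ∏ t ∈ Finset.Icc 1 j, tw m p t (d t)) = ∑' j, F j from rfl]
  rw [← Summable.sum_add_tsum_nat_add n hFsum, htail]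

/-- the value of `F` agrees on the two digit sequences representing
a nega-`Q̃`-rational number. -/
theorem stmt1 (m : ℕ → ℕ) (p : ℕ → ℕ → ℝ)
    (hp1 : ∀ n i, i ≤ m n → p n i ∈ Set.Ioo (-1 : ℝ) 1)
    (hp2 : ∀ n, ∑ i ∈ Finset.range (m n + 1), p n i = 1)
    (hp3 : ∀ n k, 1 ≤ k → k ≤ m n → rowSum p n k ∈ Set.Ioo (0 : ℝ) 1)
    (hp4 : ∀ d, ValidDigits m d →
      Tendsto (fun N => ∏ j ∈ Finset.Icc 1 N, |p j (d j)|) atTop (𝓝 0))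
    (c : ℕ → ℕ) (hc : ValidDigits m c) (n : ℕ) (hn : 1 ≤ n) (hcn : c n ≠ 0) :
    negaVal m p (fun k => if k ≤ n then c k else if Odd (k - n) then m k else 0) =
      negaVal m p (fun k => if k < n then c k else if k = n then c n - 1 else
        if Odd (k - n) then 0 else m k) := by
  -- basic facts
  have mpos : ∀ k, 1 ≤ m k := by
    intro k
    by_contra h
    have hm0 : m k = 0 := by omega
    have h2 := hp2 k
    rw [hm0] at h2
    simp at h2
    have h1 := hp1 k 0 (by omega)
    rw [h2] at h1
    exact absurd h1.2 (lt_irrefl 1)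
  set q : ℕ → ℝ := fun k => p k (m k) with hqdef
  have hsum1 : ∀ k, rowSum p k (m k) + q k = 1 := by
    intro k
    have h2 := hp2 k
    rw [Finset.sum_range_succ] at h2
    exact h2
  have hq01 : ∀ k, q k ∈ Set.Ioo (0 : ℝ) 1 := by
    intro k
    have h3 := hp3 k (m k) (mpos k) le_rfl
    have h1 := hsum1 k
    exact ⟨by linarith [h3.2], by linarith [h3.1]⟩
  have hrow : ∀ k, rowSum p k (m k) = 1 - q k := by
    intro k; linarith [hsum1 k]
  have hrow0 : ∀ k, rowSum p k 0 = 0 := by intro k; simp [rowSum]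
  -- the product tail tends to zero
  have habs : Tendsto (fun N => ∏ j ∈ Finset.Icc 1 N, q j) atTop (𝓝 0) := by
    have h := hp4 m (fun k => le_rfl)
    exact h.congr (fun N => Finset.prod_congr rfl fun j _ => abs_of_pos (hq01 j).1)
  have htail : ∀ n' : ℕ, Tendsto (fun j => ∏ t ∈ Finset.Icc (n' + 1) (n' + j), q t)
      atTop (𝓝 0) := by
    intro n'
    have hA : (0 : ℝ) < ∏ t ∈ Finset.Icc 1 n', q t :=
      Finset.prod_pos fun t _ => (hq01 t).1
    have h1 : Tendsto (fun N => ∏ t ∈ Finset.Icc (n' + 1) N, q t) atTop (𝓝 0) := by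
      have h2 : Tendsto (fun N => (∏ j ∈ Finset.Icc 1 N, q j) /
          (∏ t ∈ Finset.Icc 1 n', q t)) atTop (𝓝 (0 / (∏ t ∈ Finset.Icc 1 n', q t))) :=
        habs.div_const _
      rw [zero_div] at h2
      refine h2.congr' ?_
      filter_upwards [eventually_ge_atTop n'] with N hN
      rw [div_eq_iff hA.ne', mul_comm (∏ t ∈ Finset.Icc (n' + 1) N, q t)]
      rw [show Finset.Icc 1 n' = Finset.Ioc 0 n' from Finset.Icc_add_one_left_eq_Ioc 0 n',
        show Finset.Icc (n' + 1) N = Finset.Ioc n' N from Finset.Icc_add_one_left_eq_Ioc n' N,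
        show Finset.Icc 1 N = Finset.Ioc 0 N from Finset.Icc_add_one_left_eq_Ioc 0 N]
      exact (Finset.prod_Ioc_consecutive _ (Nat.zero_le n') hN).symm
    have h3 := h1.comp (tendsto_add_atTop_nat n')
    refine h3.congr fun j => ?_
    simp only [Function.comp_apply]
    rw [add_comm j n']
  set d1 : ℕ → ℕ := fun k => if k ≤ n then c k else if Odd (k - n) then m k else 0 with hd1
  set d2 : ℕ → ℕ := fun k => if k < n then c k else if k = n then c n - 1 else
      if Odd (k - n) then 0 else m k with hd2
  have hagree : ∀ t, t < n → d1 t = d2 t := by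
    intro t ht
    simp only [hd1, hd2, if_pos (le_of_lt ht), if_pos ht]
  obtain ⟨k, rfl⟩ : ∃ k, n = k + 1 := ⟨n - 1, by omega⟩
  set n := k + 1
  have hd1n : d1 n = c n := by simp [hd1]
  have hd2n : d2 n = c n - 1 := by simp [hd2]
  -- same finite sums for j < k
  have hsums : ∀ j, j < k →
      tw m (rowSum p) (j + 1) (d1 (j + 1)) * ∏ t ∈ Finset.Icc 1 j, tw m p t (d1 t) =
      tw m (rowSum p) (j + 1) (d2 (j + 1)) * ∏ t ∈ Finset.Icc 1 j, tw m p t (d2 t) := by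
    intro j hj
    rw [hagree (j + 1) (by omega)]
    congr 1
    exact Finset.prod_congr rfl fun t ht =>
      by rw [hagree t (by simp only [Finset.mem_Icc] at ht; omega)]
  have hprodk : ∏ t ∈ Finset.Icc 1 k, tw m p t (d1 t) =
      ∏ t ∈ Finset.Icc 1 k, tw m p t (d2 t) :=
    Finset.prod_congr rfl fun t ht =>
      by rw [hagree t (by simp only [Finset.mem_Icc] at ht; omega)]
  by_cases hodd : Odd n
  · -- n odd: d1 has zero tail, d2 has full tail
    have hno := Nat.odd_iff.mp hodd
    have hz : ∀ j, n < j → tw m (rowSum p) j (d1 j) = 0 := by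
      intro j hj
      have hjn : ¬ j ≤ n := by omega
      simp only [hd1, tw, if_neg hjn]
      by_cases h : Odd (j - n)
      · have hje : ¬ Odd j := by
          rw [Nat.odd_iff] at h ⊢; omega
        simp [h, hje, hrow0]
      · have hjo : Odd j := by
          rw [Nat.odd_iff] at h ⊢; omega
        simp [h, hjo, hrow0]
    have hq2 : ∀ j, n < j → tw m p j (d2 j) = q j := by
      intro j hj
      have h1 : ¬ j < n := by omega
      have h2 : j ≠ n := by omega
      simp only [hd2, tw, if_neg h1, if_neg h2]
      by_cases h : Odd (j - n)
      · have hje : ¬ Odd j := by rw [Nat.odd_iff] at h ⊢; omega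
        simp [h, hje, hqdef]
      · have hjo : Odd j := by rw [Nat.odd_iff] at h ⊢; omega
        simp [h, hjo, hqdef]
    have hb2 : ∀ j, n < j → tw m (rowSum p) j (d2 j) = 1 - q j := by
      intro j hj
      have h1 : ¬ j < n := by omega
      have h2 : j ≠ n := by omega
      simp only [hd2, tw, if_neg h1, if_neg h2]
      by_cases h : Odd (j - n)
      · have hje : ¬ Odd j := by rw [Nat.odd_iff] at h ⊢; omega
        simp [h, hje, hrow]
      · have hjo : Odd j := by rw [Nat.odd_iff] at h ⊢; omega
        simp [h, hjo, hrow]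
    rw [negaVal_zero_tail m p d1 n hz,
      negaVal_full_tail m p d2 n q hq2 hb2 (fun j hj => hq01 j) (htail n)]
    rw [Finset.sum_range_succ, Finset.sum_range_succ,
      Finset.prod_Icc_succ_top (by omega : 1 ≤ k + 1)]
    rw [Finset.sum_congr rfl fun j hj => hsums j (Finset.mem_range.mp hj)]
    rw [hprodk, hd1n, hd2n]
    have hkey : tw m (rowSum p) n (c n) =
        tw m (rowSum p) n (c n - 1) + tw m p n (c n - 1) := by
      simp only [tw, if_pos hodd]
      obtain ⟨a, ha⟩ : ∃ a, c n = a + 1 := ⟨c n - 1, by omega⟩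
      rw [ha]
      simp only [Nat.add_sub_cancel]
      exact rowSum_succ' p n a
    rw [hkey]
    ring
  · -- n even: d2 has zero tail, d1 has full tail
    have hne := Nat.even_iff.mp (Nat.not_odd_iff_even.mp hodd)
    have hz : ∀ j, n < j → tw m (rowSum p) j (d2 j) = 0 := by
      intro j hj
      have h1 : ¬ j < n := by omega
      have h2 : j ≠ n := by omega
      simp only [hd2, tw, if_neg h1, if_neg h2]
      by_cases h : Odd (j - n)
      · have hjo : Odd j := by rw [Nat.odd_iff] at h ⊢; omega
        simp [h, hjo, hrow0]
      · have hje : ¬ Odd j := by rw [Nat.odd_iff] at h ⊢; omega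
        simp [h, hje, hrow0]
    have hq1 : ∀ j, n < j → tw m p j (d1 j) = q j := by
      intro j hj
      have hjn : ¬ j ≤ n := by omega
      simp only [hd1, tw, if_neg hjn]
      by_cases h : Odd (j - n)
      · have hjo : Odd j := by rw [Nat.odd_iff] at h ⊢; omega
        simp [h, hjo, hqdef]
      · have hje : ¬ Odd j := by rw [Nat.odd_iff] at h ⊢; omega
        simp [h, hje, hqdef]
    have hb1 : ∀ j, n < j → tw m (rowSum p) j (d1 j) = 1 - q j := by
      intro j hj
      have hjn : ¬ j ≤ n := by omega
      simp only [hd1, tw, if_neg hjn]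
      by_cases h : Odd (j - n)
      · have hjo : Odd j := by rw [Nat.odd_iff] at h ⊢; omega
        simp [h, hjo, hrow]
      · have hje : ¬ Odd j := by rw [Nat.odd_iff] at h ⊢; omega
        simp [h, hje, hrow]
    rw [negaVal_zero_tail m p d2 n hz,
      negaVal_full_tail m p d1 n q hq1 hb1 (fun j hj => hq01 j) (htail n)]
    rw [Finset.sum_range_succ, Finset.sum_range_succ,
      Finset.prod_Icc_succ_top (by omega : 1 ≤ k + 1)]
    rw [Finset.sum_congr rfl fun j hj => hsums j (Finset.mem_range.mp hj)]
    rw [hprodk, hd1n, hd2n]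
    have hkey : tw m (rowSum p) n (c n - 1) =
        tw m (rowSum p) n (c n) + tw m p n (c n) := by
      simp only [tw, if_neg hodd]
      have h1 : m n - (c n - 1) = (m n - c n) + 1 := by
        have := hc n; omega
      rw [h1, rowSum_succ' p n (m n - c n)]
    rw [hkey]
    ring

end
end

section
/- The increment of F on the cylinder Δ^{−Q̃}_{c₁c₂...c_n} (the set of points whose first n nega-Q̃-digits equal c₁,...,c_n, which is a closed interval) equals Π_{j=1}^{n} p̃_{c_j,j}; i.e., F evaluated at the right endpoint minus F at the left endpoint equals this product. -/
open Finset Filter Topology MeasureTheory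

noncomputable section

/-! Past position `n`, the right endpoint of the cylinder reads (after the twist `tw`) the
maximal digit `m k` everywhere and the left endpoint the digit `0`. Since `β̃ = 0` for the digit
`0`, the series of the left endpoint stops after `n` terms, which it shares with the right
endpoint. For the maximal digit `β̃ = 1 - p_{m_k,k}` with `0 < p_{m_k,k} ≤ 1`, so the tail of the
right endpoint is `P · Σ_i (Q_i - Q_{i+1})`, where `P = Π_{j≤n} p̃_{c_j,j}` and
`Q_i = Π_{n<t≤n+i} p_{m_t,t}` decreases to `0`; this nonnegative telescoping series sums to `P`. -/

lemma hasSum_sub_succ_of_antitone {a : ℕ → ℝ} (ha : Antitone a)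
    (h0 : Tendsto a atTop (𝓝 0)) : HasSum (fun i => a i - a (i + 1)) (a 0) := by
  rw [hasSum_iff_tendsto_nat_of_nonneg fun i => sub_nonneg.2 (ha i.le_succ)]
  simp_rw [sum_range_sub']
  simpa using h0.const_sub (a 0)

lemma prod_Icc_one_mul_prod_Ioc {M : Type*} [CommMonoid M] (g : ℕ → M) {n N : ℕ} (h : n ≤ N) :
    (∏ t ∈ Icc 1 n, g t) * ∏ t ∈ Ioc n N, g t = ∏ t ∈ Icc 1 N, g t := by
  have hIcc : ∀ b, Icc 1 b = Ioc 0 b := Icc_add_one_left_eq_Ioc 0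
  rw [hIcc, hIcc, prod_Ioc_consecutive _ n.zero_le h]

def twDigit (m : ℕ → ℕ) (k i : ℕ) : ℕ := if Odd k then i else m k - i

lemma tw_eq_twDigit (m : ℕ → ℕ) (f : ℕ → ℕ → ℝ) (k i : ℕ) :
    tw m f k i = f k (twDigit m k i) := by
  unfold tw twDigit
  split_ifs <;> rfl

lemma twDigit_ite_zero_max {m : ℕ → ℕ} {n k : ℕ} (hk : n < k) :
    twDigit m k (if Odd (k - n) then 0 else m k) = if Odd n then m k else 0 := by
  have := Nat.odd_sub hk.le
  rw [twDigit]
  split_ifs <;> simp_all [← Nat.not_odd_iff_even]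

lemma twDigit_ite_max_zero {m : ℕ → ℕ} {n k : ℕ} (hk : n < k) :
    twDigit m k (if Odd (k - n) then m k else 0) = if Odd n then 0 else m k := by
  have := Nat.odd_sub hk.le
  rw [twDigit]
  split_ifs <;> simp_all [← Nat.not_odd_iff_even]

section Series

variable {m : ℕ → ℕ} {f : ℕ → ℕ → ℝ}

def negaTerm (m : ℕ → ℕ) (f : ℕ → ℕ → ℝ) (d : ℕ → ℕ) (j : ℕ) : ℝ :=
  tw m (rowSum f) (j + 1) (d (j + 1)) * ∏ t ∈ Icc 1 j, tw m f t (d t)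

lemma negaVal_eq_tsum (d : ℕ → ℕ) : negaVal m f d = ∑' j, negaTerm m f d j := by
  simp only [negaVal, negaShift, negaTerm, zero_add]

lemma sum_negaTerm_congr {d d' : ℕ → ℕ} {n : ℕ} (h : ∀ k ≤ n, d k = d' k) :
    ∑ j ∈ range n, negaTerm m f d j = ∑ j ∈ range n, negaTerm m f d' j := by
  refine sum_congr rfl fun j hj => ?_
  have hj : j + 1 ≤ n := mem_range.1 hj
  rw [negaTerm, negaTerm, h _ hj]
  congr 1
  exact prod_congr rfl fun t ht => by rw [h t ((mem_Icc.1 ht).2.trans (by omega))]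

lemma negaVal_eq_sum_of_twDigit_eq_zero {d : ℕ → ℕ} {n : ℕ}
    (h : ∀ k, n < k → twDigit m k (d k) = 0) :
    negaVal m f d = ∑ j ∈ range n, negaTerm m f d j := by
  rw [negaVal_eq_tsum]
  refine tsum_eq_sum fun j hj => ?_
  rw [negaTerm, tw_eq_twDigit, h (j + 1) (by simp at hj; omega)]
  simp [rowSum]

lemma negaVal_eq_sum_add_prod_of_twDigit_eq_max {d : ℕ → ℕ} {n : ℕ}
    (hrow : ∀ k, rowSum f k (m k) = 1 - f k (m k)) (hmax : ∀ k, f k (m k) ∈ Set.Icc 0 1)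
    (hlim : Tendsto (fun N => ∏ t ∈ Ioc n N, f t (m t)) atTop (𝓝 0))
    (h : ∀ k, n < k → twDigit m k (d k) = m k) :
    negaVal m f d = ∑ j ∈ range n, negaTerm m f d j + ∏ t ∈ Icc 1 n, tw m f t (d t) := by
  set P := ∏ t ∈ Icc 1 n, tw m f t (d t)
  set Q : ℕ → ℝ := fun i => ∏ t ∈ Ioc n (i + n), f t (m t)
  have hQ_succ : ∀ i, Q (i + 1) = Q i * f (i + n + 1) (m (i + n + 1)) := fun i => by
    simp only [Q, add_right_comm i 1 n, prod_Ioc_succ_top (n.le_add_left i)]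
  have hQ_anti : Antitone Q := antitone_nat_of_succ_le fun i => by
    rw [hQ_succ]
    exact mul_le_of_le_one_right (prod_nonneg fun t _ => (hmax t).1) (hmax _).2
  have hterm : ∀ i, negaTerm m f d (i + n) = P * (Q i - Q (i + 1)) := fun i => by
    have hprod : ∏ t ∈ Icc 1 (i + n), tw m f t (d t) = P * Q i := by
      rw [← prod_Icc_one_mul_prod_Ioc _ (n.le_add_left i)]
      congr 1
      exact prod_congr rfl fun t ht => by rw [tw_eq_twDigit, h t (mem_Ioc.1 ht).1]
    rw [negaTerm, hprod, tw_eq_twDigit, h _ (by omega), hrow, hQ_succ]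
    ring
  have htail : HasSum (fun i => negaTerm m f d (i + n)) P := by
    have := (hasSum_sub_succ_of_antitone hQ_anti (hlim.comp (tendsto_add_atTop_nat n))).mul_left P
    simpa [Q, ← hterm] using this
  rw [negaVal_eq_tsum, ((hasSum_nat_add_iff n).1 htail).tsum_eq, add_comm]

end Series

section Increment

variable {m : ℕ → ℕ} {p : ℕ → ℕ → ℝ}

lemma rowSum_maxDigit_eq (hp2 : ∀ n, ∑ i ∈ range (m n + 1), p n i = 1) (k : ℕ) :
    rowSum p k (m k) = 1 - p k (m k) := by
  rw [rowSum, eq_sub_iff_add_eq, ← sum_range_succ, hp2]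

lemma maxDigit_mem_Ioc (hp2 : ∀ n, ∑ i ∈ range (m n + 1), p n i = 1)
    (hp3 : ∀ n k, 1 ≤ k → k ≤ m n → rowSum p n k ∈ Set.Ioo (0 : ℝ) 1) (k : ℕ) :
    p k (m k) ∈ Set.Ioc 0 1 := by
  rcases Nat.eq_zero_or_pos (m k) with h | h
  · have hsum := hp2 k
    simp only [h, zero_add, sum_range_one] at hsum
    simp [h, hsum]
  · have hrow := hp3 k (m k) h le_rfl
    rw [rowSum_maxDigit_eq hp2, Set.mem_Ioo] at hrow
    constructor <;> linarith

lemma tendsto_prod_Ioc_maxDigit (hp2 : ∀ n, ∑ i ∈ range (m n + 1), p n i = 1)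
    (hp3 : ∀ n k, 1 ≤ k → k ≤ m n → rowSum p n k ∈ Set.Ioo (0 : ℝ) 1)
    (hp4 : ∀ d, ValidDigits m d →
      Tendsto (fun N => ∏ j ∈ Icc 1 N, |p j (d j)|) atTop (𝓝 0)) (n : ℕ) :
    Tendsto (fun N => ∏ t ∈ Ioc n N, p t (m t)) atTop (𝓝 0) := by
  have hpos : ∀ t, 0 < p t (m t) := fun t => (maxDigit_mem_Ioc hp2 hp3 t).1
  have hA : 0 < ∏ t ∈ Icc 1 n, p t (m t) := prod_pos fun t _ => hpos t
  have hlim := (hp4 m fun _ => le_rfl).div_const (∏ t ∈ Icc 1 n, p t (m t))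
  simp only [abs_of_pos (hpos _), zero_div] at hlim
  refine hlim.congr' ((eventually_ge_atTop n).mono fun N hN => ?_)
  rw [← prod_Icc_one_mul_prod_Ioc _ hN, mul_div_cancel_left₀ _ hA.ne']

theorem negaVal_sub_negaVal_eq_prod (hp2 : ∀ n, ∑ i ∈ range (m n + 1), p n i = 1)
    (hp3 : ∀ n k, 1 ≤ k → k ≤ m n → rowSum p n k ∈ Set.Ioo (0 : ℝ) 1)
    (hp4 : ∀ d, ValidDigits m d →
      Tendsto (fun N => ∏ j ∈ Icc 1 N, |p j (d j)|) atTop (𝓝 0))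
    {c dTop dBot : ℕ → ℕ} {n : ℕ} (hTop : ∀ k ≤ n, dTop k = c k) (hBot : ∀ k ≤ n, dBot k = c k)
    (hTop_tail : ∀ k, n < k → twDigit m k (dTop k) = m k)
    (hBot_tail : ∀ k, n < k → twDigit m k (dBot k) = 0) :
    negaVal m p dTop - negaVal m p dBot = ∏ j ∈ Icc 1 n, tw m p j (c j) := by
  have hmax k : p k (m k) ∈ Set.Icc 0 1 := Set.Ioc_subset_Icc_self (maxDigit_mem_Ioc hp2 hp3 k)
  rw [negaVal_eq_sum_add_prod_of_twDigit_eq_max (rowSum_maxDigit_eq hp2) hmax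
      (tendsto_prod_Ioc_maxDigit hp2 hp3 hp4 n) hTop_tail,
    negaVal_eq_sum_of_twDigit_eq_zero hBot_tail,
    sum_negaTerm_congr fun k hk => (hTop k hk).trans (hBot k hk).symm, add_sub_cancel_left]
  exact prod_congr rfl fun j hj => by rw [hTop j (mem_Icc.1 hj).2]

end Increment

theorem stmt5_general (m : ℕ → ℕ) (p : ℕ → ℕ → ℝ)
    (hp2 : ∀ n, ∑ i ∈ Finset.range (m n + 1), p n i = 1)
    (hp3 : ∀ n k, 1 ≤ k → k ≤ m n → rowSum p n k ∈ Set.Ioo (0 : ℝ) 1)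
    (hp4 : ∀ d, ValidDigits m d →
      Tendsto (fun N => ∏ j ∈ Finset.Icc 1 N, |p j (d j)|) atTop (𝓝 0))
    (c : ℕ → ℕ) (n : ℕ) :
    (if Odd n then
        negaVal m p (fun k => if k ≤ n then c k else if Odd (k - n) then 0 else m k) -
          negaVal m p (fun k => if k ≤ n then c k else if Odd (k - n) then m k else 0)
      else
        negaVal m p (fun k => if k ≤ n then c k else if Odd (k - n) then m k else 0) -
          negaVal m p (fun k => if k ≤ n then c k else if Odd (k - n) then 0 else m k)) =
      ∏ j ∈ Finset.Icc 1 n, tw m p j (c j) := by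
  split_ifs with hn <;>
    refine negaVal_sub_negaVal_eq_prod hp2 hp3 hp4 (fun k hk => if_pos hk) (fun k hk => if_pos hk)
      (fun k hk => ?_) (fun k hk => ?_) <;>
    simp only [if_neg hk.not_ge, twDigit_ite_zero_max hk, twDigit_ite_max_zero hk, hn,
      if_true, if_false]

/-- the increment of `F` on the cylinder `Δ^{−Q̃}_{c₁…c_n}`
(value at the right endpoint minus value at the left endpoint) equals `Π_{j≤n} p̃_{c_j,j}`. -/
theorem stmt5 (m : ℕ → ℕ) (p : ℕ → ℕ → ℝ)
    (hp1 : ∀ n i, i ≤ m n → p n i ∈ Set.Ioo (-1 : ℝ) 1)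
    (hp2 : ∀ n, ∑ i ∈ Finset.range (m n + 1), p n i = 1)
    (hp3 : ∀ n k, 1 ≤ k → k ≤ m n → rowSum p n k ∈ Set.Ioo (0 : ℝ) 1)
    (hp4 : ∀ d, ValidDigits m d →
      Tendsto (fun N => ∏ j ∈ Finset.Icc 1 N, |p j (d j)|) atTop (𝓝 0))
    (c : ℕ → ℕ) (hc : ValidDigits m c) (n : ℕ) (hn : 1 ≤ n) :
    (if Odd n then
        negaVal m p (fun k => if k ≤ n then c k else if Odd (k - n) then 0 else m k) -
          negaVal m p (fun k => if k ≤ n then c k else if Odd (k - n) then m k else 0)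
      else
        negaVal m p (fun k => if k ≤ n then c k else if Odd (k - n) then m k else 0) -
          negaVal m p (fun k => if k ≤ n then c k else if Odd (k - n) then 0 else m k)) =
      ∏ j ∈ Finset.Icc 1 n, tw m p j (c j) :=
  stmt5_general m p hp2 hp3 hp4 c n
end
end

section
/- Suppose all p_{i,n} ≥ 0. If Π_{n=1}^{∞} (Σ_{i : p̃_{i,n} > 0} q̃_{i,n}) = 0, or if Σ_{n=1}^{∞} (Σ_{i : p̃_{i,n} = 0} q̃_{i,n}) = ∞, then F is a singular (Cantor-type) distribution function: F is continuous, nondecreasing, and F′ = 0 Lebesgue-almost everywhere. -/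
open Finset Filter Topology MeasureTheory

noncomputable section

/-!
Flipping the digits at even positions turns nega-`Q̃` expansions into ordinary `Q`-expansions
(the row sums in the two conditions are unchanged by the flip), and then `F` maps the point with
`q`-digits `c` to the point with `p`-digits `c`. Both expansions order points lexicographically by
their digits, so `F` is monotone, and every `z ∈ [0, 1]` has a greedy `p`-expansion, so `F` maps
`[0, 1]` onto `[0, 1]`; a monotone map onto an interval is continuous.

The Stieltjes measure `μ_F` gives the rank-`N` cylinder with digits `c` the mass
`∏_{n ≤ N} p_{c_n,n}`, so it is carried by the union of the cylinders whose digits all have positive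
`p`-weight, a set of Lebesgue measure `∏_{n ≤ N} Σ_{p_{i,n} > 0} q_{i,n}`. This tends to `0`, under
the second condition because `1 - x ≤ e^{-x}`. Hence `μ_F ⟂ λ`, and `F' = dμ_F/dλ = 0` almost
everywhere.
-/

lemma eq_prod_mul_of_forall_eq_mul_succ {u a : ℕ → ℝ} {k n : ℕ}
    (h : ∀ j < n, u (k + j) = a (k + j + 1) * u (k + j + 1)) :
    u k = (∏ t ∈ Icc (k + 1) (k + n), a t) * u (k + n) := by
  induction n with
  | zero => simp
  | succ n ih =>
    rw [ih fun j hj => h j (by omega), h n (by omega), ← add_assoc, prod_Icc_succ_top (by omega)]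
    ring

lemma eq_of_forall_sub_eq_mul {x y : ℝ} {P u : ℕ → ℝ} (hP0 : ∀ n, 0 ≤ P n)
    (hP : Tendsto P atTop (𝓝 0)) (hu : ∀ n, |u n| ≤ 1) (h : ∀ n, x - y = P n * u n) : x = y := by
  refine sub_eq_zero.1 (abs_nonpos_iff.1 (ge_of_tendsto' hP fun n => ?_))
  rw [h n, abs_mul, abs_of_nonneg (hP0 n)]
  exact mul_le_of_le_one_right (hP0 n) (hu n)

lemma tendsto_prod_Icc_zero_of_not_summable {a b : ℕ → ℝ} (ha : ∀ n, 0 ≤ a n)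
    (hb : ∀ n, 0 ≤ b n) (hab : ∀ n, a n + b n = 1) (hs : ¬Summable fun n => b (n + 1)) :
    Tendsto (fun N => ∏ n ∈ Icc 1 N, a n) atTop (𝓝 0) := by
  have hsum : Tendsto (fun N => ∑ n ∈ Icc 1 N, b n) atTop atTop := by
    refine ((not_summable_iff_tendsto_nat_atTop_of_nonneg fun n => hb (n + 1)).1 hs).congr
      fun N => ?_
    induction N with
    | zero => simp
    | succ N ih => rw [sum_range_succ, ih, sum_Icc_succ_top (by omega)]
  refine squeeze_zero (fun N => prod_nonneg fun n _ => ha n) (fun N => ?_)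
    (Real.tendsto_exp_atBot.comp (tendsto_neg_atBot_iff.2 hsum))
  calc ∏ n ∈ Icc 1 N, a n ≤ ∏ n ∈ Icc 1 N, Real.exp (-b n) :=
        prod_le_prod (fun n _ => ha n) fun n _ => by linarith [Real.add_one_le_exp (-b n), hab n]
    _ = Real.exp (-∑ n ∈ Icc 1 N, b n) := by rw [← Real.exp_sum, sum_neg_distrib]

open Set in
/-- Adding `x - projIcc x` makes the extension surjective onto `ℝ`, and a monotone surjection is
continuous. -/
theorem continuous_IccExtend_of_monotoneOn_of_surjOn {f : ℝ → ℝ} {a b : ℝ} (hab : a ≤ b)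
    (hmono : MonotoneOn f (Icc a b)) (hsurj : SurjOn f (Icc a b) (Icc (f a) (f b))) :
    Continuous (IccExtend hab ((Icc a b).domRestrict f)) := by
  set F := IccExtend hab ((Icc a b).domRestrict f)
  set g : ℝ → ℝ := fun x => F x + (x - projIcc a b hab x)
  have hFmono : Monotone F := Monotone.IccExtend hab (monotoneOn_iff_monotone.1 hmono)
  have hgmono : Monotone g := fun x y hxy => by
    have hxy' : x - max a (min b x) ≤ y - max a (min b y) := by grind
    simpa only [g, coe_projIcc] using add_le_add (hFmono hxy) hxy'
  have hgsurj : Function.Surjective g := fun y => by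
    rcases lt_or_ge y (f a) with hy | hy
    · refine ⟨a + (y - f a), ?_⟩
      have hle : a + (y - f a) ≤ a := by linarith
      simp only [g, F, IccExtend_of_le_left _ _ hle, projIcc_of_le_left _ hle, domRestrict_apply]
      ring
    rcases lt_or_ge (f b) y with hy' | hy'
    · refine ⟨b + (y - f b), ?_⟩
      have hle : b ≤ b + (y - f b) := by linarith
      simp only [g, F, IccExtend_of_right_le _ _ hle, projIcc_of_right_le _ hle, domRestrict_apply]
      ring
    obtain ⟨x, hx, rfl⟩ := hsurj ⟨hy, hy'⟩
    refine ⟨x, ?_⟩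
    simp [g, F, IccExtend_of_mem _ _ hx, projIcc_of_mem _ hx]
  have hproj : Continuous fun x => x - (projIcc a b hab x : ℝ) :=
    continuous_id.sub (continuous_subtype_val.comp continuous_projIcc)
  exact ((hgmono.continuous_of_surjective hgsurj).sub hproj).congr fun x => by simp [g]

open Set in
lemma mutuallySingular_of_forall_measure_compl_eq_zero {α : Type*} [MeasurableSpace α]
    {μ ν : Measure α} {U : ℕ → Set α} (hU : ∀ N, MeasurableSet (U N)) (hμ : ∀ N, μ (U N)ᶜ = 0)
    (hν : Tendsto (fun N => ν (U N)) atTop (𝓝 0)) : μ ⟂ₘ ν := by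
  refine ⟨(⋂ N, U N)ᶜ, (MeasurableSet.iInter hU).compl, ?_, ?_⟩
  · rw [compl_iInter]
    exact measure_iUnion_null hμ
  · rw [compl_compl]
    exact le_antisymm (ge_of_tendsto' hν fun N => measure_mono (iInter_subset U N)) zero_le

section IccStieltjes

open Set

variable {G : ℝ → ℝ} {a b : ℝ} (hab : a ≤ b) (hmono : MonotoneOn G (Icc a b))
  (hcont : Continuous (IccExtend hab ((Icc a b).domRestrict G)))

def IccStieltjes : StieltjesFunction ℝ where
  toFun := IccExtend hab ((Icc a b).domRestrict G)
  mono' := Monotone.IccExtend hab (monotoneOn_iff_monotone.1 hmono)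
  right_continuous' _ := hcont.continuousWithinAt

lemma IccStieltjes_apply (x : ℝ) :
    IccStieltjes hab hmono hcont x = IccExtend hab ((Icc a b).domRestrict G) x :=
  rfl

lemma IccStieltjes_apply_of_mem {x : ℝ} (hx : x ∈ Icc a b) : IccStieltjes hab hmono hcont x = G x :=
  (IccStieltjes_apply hab hmono hcont x).trans (IccExtend_of_mem hab _ hx)

lemma measure_univ_IccStieltjes :
    (IccStieltjes hab hmono hcont).measure univ = ENNReal.ofReal (G b - G a) := by
  refine StieltjesFunction.measure_univ _ (tendsto_const_nhds.congr' ?_)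
    (tendsto_const_nhds.congr' ?_)
  · filter_upwards [eventually_le_atBot a] with x hx
    rw [IccStieltjes_apply, IccExtend_of_le_left hab _ hx, domRestrict_apply]
  · filter_upwards [eventually_ge_atTop b] with x hx
    rw [IccStieltjes_apply, IccExtend_of_right_le hab _ hx, domRestrict_apply]

lemma ae_hasDerivAt_zero_of_mutuallySingular
    (h : (IccStieltjes hab hmono hcont).measure ⟂ₘ volume) :
    ∀ᵐ x ∂volume.restrict (Icc a b), HasDerivAt G 0 x := by
  have hderiv : ∀ᵐ x, HasDerivAt (IccStieltjes hab hmono hcont) 0 x := by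
    filter_upwards [(IccStieltjes hab hmono hcont).ae_hasDerivAt, h.rnDeriv_ae_eq_zero]
      with x hx h0
    simpa [h0] using hx
  rw [Measure.restrict_congr_set Ioo_ae_eq_Icc.symm]
  filter_upwards [ae_restrict_mem measurableSet_Ioo, ae_restrict_of_ae hderiv] with x hx hd
  refine hd.congr_of_eventuallyEq ?_
  filter_upwards [Ioo_mem_nhds hx.1 hx.2] with y hy
  exact (IccStieltjes_apply_of_mem hab hmono hcont (Ioo_subset_Icc_self hy)).symm

end IccStieltjes

namespace NegaQ

/-- The ordinary `Q`-expansion with digits `c (k+1), c (k+2), …`; digits sit at positions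
`1, 2, …`, so `c 0` is ignored. -/
def tailVal (f : ℕ → ℕ → ℝ) (c : ℕ → ℕ) (k : ℕ) : ℝ :=
  ∑' j : ℕ, rowSum f (k + j + 1) (c (k + j + 1)) * ∏ t ∈ Icc (k + 1) (k + j), f t (c t)

structure IsDigitDistribution (m : ℕ → ℕ) (f : ℕ → ℕ → ℝ) : Prop where
  nonneg : ∀ n i, i ≤ m n → 0 ≤ f n i
  sum_eq_one : ∀ n, ∑ i ∈ range (m n + 1), f n i = 1

def HasNullCylinders (m : ℕ → ℕ) (f : ℕ → ℕ → ℝ) : Prop :=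
  ∀ d, ValidDigits m d → Tendsto (fun N => ∏ j ∈ Icc 1 N, f j (d j)) atTop (𝓝 0)

lemma rowSum_succ (f : ℕ → ℕ → ℝ) (n k : ℕ) : rowSum f n (k + 1) = rowSum f n k + f n k :=
  sum_range_succ _ _

variable {m : ℕ → ℕ} {f q p : ℕ → ℕ → ℝ} {c c' : ℕ → ℕ}

lemma tailVal_congr {k : ℕ} (h : ∀ t, k < t → c t = c' t) : tailVal f c k = tailVal f c' k :=
  tsum_congr fun j => by
    rw [h _ (by omega), prod_congr rfl fun t ht => by rw [h t (mem_Icc.1 ht).1]]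

lemma tailVal_eq_zero {k : ℕ} (h : ∀ t, k < t → c t = 0) : tailVal f c k = 0 := by
  rw [tailVal_congr (c' := 0) h]
  simp [tailVal, rowSum]

lemma exists_first_ne (h : ∃ n, 1 ≤ n ∧ c n ≠ c' n) :
    ∃ k, (∀ t ∈ Icc 1 k, c t = c' t) ∧ c (k + 1) ≠ c' (k + 1) := by
  classical
  have hex : ∃ k, c (k + 1) ≠ c' (k + 1) := by
    obtain ⟨n, hn, hne⟩ := h
    exact ⟨n - 1, by rwa [Nat.sub_add_cancel hn]⟩
  refine ⟨Nat.find hex, fun t ht => ?_, Nat.find_spec hex⟩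
  obtain ⟨ht1, ht2⟩ := mem_Icc.1 ht
  simpa [Nat.sub_add_cancel ht1] using Nat.find_min hex (m := t - 1) (by omega)

namespace IsDigitDistribution

variable (hf : IsDigitDistribution m f)
include hf

lemma rowSum_mono {n k k' : ℕ} (h : k ≤ k') (hk' : k' ≤ m n + 1) :
    rowSum f n k ≤ rowSum f n k' :=
  sum_le_sum_of_subset_of_nonneg (range_subset_range.2 h) fun i hi _ =>
    hf.nonneg n i (by have := mem_range.1 hi; omega)

lemma rowSum_nonneg {n k : ℕ} (hk : k ≤ m n + 1) : 0 ≤ rowSum f n k :=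
  hf.rowSum_mono (Nat.zero_le k) hk

lemma rowSum_add_le_one {n i : ℕ} (hi : i ≤ m n) : rowSum f n i + f n i ≤ 1 := by
  rw [← rowSum_succ, ← hf.sum_eq_one n]
  exact hf.rowSum_mono (by omega) le_rfl

lemma rowSum_add_eq_one (n : ℕ) : rowSum f n (m n) + f n (m n) = 1 := by
  rw [← rowSum_succ]
  exact hf.sum_eq_one n

lemma exists_pos (n : ℕ) : ∃ i ≤ m n, 0 < f n i := by
  obtain ⟨i, hi, hpos⟩ := exists_lt_of_sum_lt (s := range (m n + 1)) (f := fun _ => (0 : ℝ))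
    (g := f n) (by simp [hf.sum_eq_one n])
  exact ⟨i, by have := mem_range.1 hi; omega, hpos⟩

section

variable (hc : ValidDigits m c)
include hc

lemma prod_nonneg (s : Finset ℕ) : 0 ≤ ∏ t ∈ s, f t (c t) :=
  Finset.prod_nonneg fun t _ => hf.nonneg t (c t) (hc t)

lemma tailVal_term_nonneg (k j : ℕ) :
    0 ≤ rowSum f (k + j + 1) (c (k + j + 1)) * ∏ t ∈ Icc (k + 1) (k + j), f t (c t) :=
  mul_nonneg (hf.rowSum_nonneg (by have := hc (k + j + 1); omega)) (hf.prod_nonneg hc _)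

lemma sum_range_add_prod_le_one (k J : ℕ) :
    ∑ j ∈ range J, rowSum f (k + j + 1) (c (k + j + 1)) * ∏ t ∈ Icc (k + 1) (k + j), f t (c t)
      + ∏ t ∈ Icc (k + 1) (k + J), f t (c t) ≤ 1 := by
  induction J with
  | zero => simp
  | succ J ih =>
    rw [sum_range_succ, ← add_assoc k J 1, prod_Icc_succ_top (by omega)]
    have := mul_le_mul_of_nonneg_left (hf.rowSum_add_le_one (hc (k + J + 1)))
      (hf.prod_nonneg hc (Icc (k + 1) (k + J)))
    linarith

lemma sum_range_le_one (k J : ℕ) :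
    ∑ j ∈ range J, rowSum f (k + j + 1) (c (k + j + 1)) * ∏ t ∈ Icc (k + 1) (k + j), f t (c t)
      ≤ 1 := by
  linarith [hf.sum_range_add_prod_le_one hc k J, hf.prod_nonneg hc (Icc (k + 1) (k + J))]

lemma tailVal_nonneg (k : ℕ) : 0 ≤ tailVal f c k :=
  tsum_nonneg (hf.tailVal_term_nonneg hc k)

lemma tailVal_le_one (k : ℕ) : tailVal f c k ≤ 1 :=
  Real.tsum_le_of_sum_range_le (hf.tailVal_term_nonneg hc k) (hf.sum_range_le_one hc k)

lemma tailVal_mem_Icc (k : ℕ) : tailVal f c k ∈ Set.Icc (0 : ℝ) 1 :=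
  ⟨hf.tailVal_nonneg hc k, hf.tailVal_le_one hc k⟩

lemma tailVal_eq_add_mul (k : ℕ) :
    tailVal f c k = rowSum f (k + 1) (c (k + 1)) + f (k + 1) (c (k + 1)) * tailVal f c (k + 1) := by
  have hs := summable_of_sum_range_le (hf.tailVal_term_nonneg hc k) (hf.sum_range_le_one hc k)
  rw [tailVal, hs.tsum_eq_zero_add, tailVal, ← tsum_mul_left]
  congr 1
  · simp
  · refine tsum_congr fun j => ?_
    rw [show k + (j + 1) + 1 = k + 1 + j + 1 by omega, show k + (j + 1) = k + 1 + j by omega,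
      ← insert_Icc_add_one_left_eq_Icc (by omega), prod_insert (by simp)]
    ring

end

lemma tailVal_sub_tailVal (hc : ValidDigits m c) (hc' : ValidDigits m c') {n : ℕ}
    (hag : ∀ t ∈ Icc 1 n, c t = c' t) :
    tailVal f c 0 - tailVal f c' 0 =
      (∏ t ∈ Icc 1 n, f t (c t)) * (tailVal f c n - tailVal f c' n) := by
  simpa using eq_prod_mul_of_forall_eq_mul_succ (k := 0) (n := n)
    (u := fun j => tailVal f c j - tailVal f c' j) (a := fun t => f t (c t)) fun j hj => by
      simp only [zero_add]
      rw [hf.tailVal_eq_add_mul hc, hf.tailVal_eq_add_mul hc', hag (j + 1) (by simp; omega)]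
      ring

lemma tailVal_le_tailVal (hc : ValidDigits m c) (hc' : ValidDigits m c') {k : ℕ}
    (hag : ∀ t ∈ Icc 1 k, c t = c' t) (hlt : c (k + 1) < c' (k + 1)) :
    tailVal f c 0 ≤ tailVal f c' 0 := by
  have hk : tailVal f c k ≤ tailVal f c' k := by
    rw [hf.tailVal_eq_add_mul hc, hf.tailVal_eq_add_mul hc']
    have hnext := mul_le_mul_of_nonneg_left (hf.tailVal_le_one hc (k + 1))
      (hf.nonneg _ _ (hc (k + 1)))
    have hnext' := mul_nonneg (hf.nonneg _ _ (hc' (k + 1))) (hf.tailVal_nonneg hc' (k + 1))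
    have hrow : rowSum f (k + 1) (c (k + 1) + 1) ≤ rowSum f (k + 1) (c' (k + 1)) :=
      hf.rowSum_mono hlt (by have := hc' (k + 1); omega)
    rw [rowSum_succ] at hrow
    linarith
  rw [← sub_nonpos, hf.tailVal_sub_tailVal hc hc' hag]
  exact mul_nonpos_of_nonneg_of_nonpos (hf.prod_nonneg hc _) (sub_nonpos.2 hk)

lemma tendsto_prod_Icc_succ (hf4 : HasNullCylinders m f) (hc : ValidDigits m c) (k : ℕ) :
    Tendsto (fun N => ∏ t ∈ Icc (k + 1) N, f t (c t)) atTop (𝓝 0) := by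
  choose e he hpos using hf.exists_pos
  set d : ℕ → ℕ := fun t => if t ≤ k then e t else c t
  have hd : ValidDigits m d := fun t => by
    simp only [d]; split
    exacts [he t, hc t]
  have hprefix : 0 < ∏ t ∈ Icc 1 k, f t (d t) :=
    Finset.prod_pos fun t ht => by simpa [d, (mem_Icc.1 ht).2] using hpos t
  have hlim := (hf4 d hd).div_const (∏ t ∈ Icc 1 k, f t (d t))
  rw [zero_div] at hlim
  refine hlim.congr' ?_
  filter_upwards [eventually_ge_atTop k] with N hN
  have hsplit := prod_Ioc_consecutive (fun t => f t (d t)) (Nat.zero_le k) hN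
  simp only [← Icc_add_one_left_eq_Ioc, zero_add] at hsplit
  rw [← hsplit, mul_div_cancel_left₀ _ hprefix.ne']
  exact prod_congr rfl fun t ht => by simp [d, show ¬t ≤ k by have := (mem_Icc.1 ht).1; omega]

lemma tailVal_eq_one (hf4 : HasNullCylinders m f) (hc : ValidDigits m c) {k : ℕ}
    (htop : ∀ t, k < t → c t = m t) : tailVal f c k = 1 := by
  have hlim : Tendsto (fun n => ∏ t ∈ Icc (k + 1) (k + n), f t (c t)) atTop (𝓝 0) := by
    simpa [Function.comp_def, add_comm] using
      (hf.tendsto_prod_Icc_succ hf4 hc k).comp (tendsto_add_atTop_nat k)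
  refine (eq_of_forall_sub_eq_mul (fun n => hf.prod_nonneg hc _) hlim
    (fun n => abs_sub_le_of_nonneg_of_le zero_le_one le_rfl (hf.tailVal_nonneg hc (k + n))
      (hf.tailVal_le_one hc (k + n))) fun n => ?_).symm
  refine eq_prod_mul_of_forall_eq_mul_succ (u := fun j => 1 - tailVal f c j) fun j _ => ?_
  have hrow := hf.rowSum_add_eq_one (k + j + 1)
  rw [hf.tailVal_eq_add_mul hc (k + j), htop _ (by omega)]
  linear_combination -hrow

lemma exists_rowSum_le_le {r : ℝ} (hr : r ∈ Set.Icc (0 : ℝ) 1) (n : ℕ) :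
    ∃ i ≤ m n, rowSum f n i ≤ r ∧ r ≤ rowSum f n (i + 1) := by
  classical
  let P : ℕ → Prop := fun j => rowSum f n j ≤ r
  have hle : Nat.findGreatest P (m n) ≤ m n := Nat.findGreatest_le _
  refine ⟨_, hle, Nat.findGreatest_spec (P := P) (Nat.zero_le _)
    (by simpa [P, rowSum] using hr.1), ?_⟩
  rcases hle.eq_or_lt with hi | hi
  · rw [hi]
    exact hr.2.trans (hf.sum_eq_one n).ge
  · exact (not_le.1 (Nat.findGreatest_is_greatest (P := P) (Nat.lt_succ_self _) hi)).le

lemma exists_digit {r : ℝ} (hr : r ∈ Set.Icc (0 : ℝ) 1) (n : ℕ) :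
    ∃ i ≤ m n, ∃ r' ∈ Set.Icc (0 : ℝ) 1, r = rowSum f n i + f n i * r' := by
  obtain ⟨i, hi, hlo, hhi⟩ := hf.exists_rowSum_le_le hr n
  rw [rowSum_succ] at hhi
  refine ⟨i, hi, ?_⟩
  rcases (hf.nonneg n i hi).eq_or_lt with h0 | hpos
  · exact ⟨0, ⟨le_rfl, zero_le_one⟩, by rw [← h0] at hhi ⊢; linarith⟩
  · refine ⟨(r - rowSum f n i) / f n i, ⟨div_nonneg (by linarith) hpos.le,
      (div_le_one hpos).2 (by linarith)⟩, ?_⟩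
    rw [mul_div_cancel₀ _ hpos.ne']
    ring

lemma exists_tailVal_eq (hf4 : HasNullCylinders m f) {z : ℝ} (hz : z ∈ Set.Icc (0 : ℝ) 1) :
    ∃ c, ValidDigits m c ∧ tailVal f c 0 = z := by
  choose! digit hdigit rem hrem hdecomp using fun n r (hr : r ∈ Set.Icc (0 : ℝ) 1) =>
    hf.exists_digit hr n
  let R : ℕ → ℝ := fun n => Nat.rec z (fun n r => rem (n + 1) r) n
  have hR : ∀ n, R n ∈ Set.Icc (0 : ℝ) 1 := fun n => by
    induction n with
    | zero => exact hz
    | succ n ih => exact hrem _ _ ih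
  set c : ℕ → ℕ := fun n => digit n (R (n - 1))
  have hc : ValidDigits m c := fun n => hdigit _ _ (hR _)
  have hstep : ∀ j, R j = rowSum f (j + 1) (c (j + 1)) + f (j + 1) (c (j + 1)) * R (j + 1) :=
    fun j => hdecomp (j + 1) (R j) (hR j)
  refine ⟨c, hc, (eq_of_forall_sub_eq_mul (fun n => hf.prod_nonneg hc _) (hf4 c hc)
    (fun n => abs_sub_le_of_nonneg_of_le (hR n).1 (hR n).2 (hf.tailVal_nonneg hc n)
      (hf.tailVal_le_one hc n)) fun n => ?_).symm⟩
  rw [show z = R 0 from rfl]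
  simpa using eq_prod_mul_of_forall_eq_mul_succ (k := 0) (n := n)
    (u := fun j => R j - tailVal f c j) (a := fun t => f t (c t)) fun j _ => by
      simp only [zero_add]
      rw [hf.tailVal_eq_add_mul hc j, hstep j]
      ring

end IsDigitDistribution

/-- Reading the even-position digits backwards turns nega-digits into ordinary digits. -/
def flipDigits (m d : ℕ → ℕ) (n : ℕ) : ℕ := if Odd n then d n else m n - d n

lemma tw_eq_flipDigits (f : ℕ → ℕ → ℝ) (d : ℕ → ℕ) (n : ℕ) :
    tw m f n (d n) = f n (flipDigits m d n) := by
  unfold tw flipDigits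
  split <;> rfl

lemma negaVal_eq_tailVal (d : ℕ → ℕ) : negaVal m f d = tailVal f (flipDigits m d) 0 :=
  tsum_congr fun j => by
    rw [tw_eq_flipDigits, prod_congr rfl fun t _ => tw_eq_flipDigits f d t]

lemma validDigits_flipDigits {d : ℕ → ℕ} (hd : ValidDigits m d) :
    ValidDigits m (flipDigits m d) := fun n => by
  unfold flipDigits
  split
  exacts [hd n, Nat.sub_le _ _]

lemma flipDigits_flipDigits {d : ℕ → ℕ} (hd : ValidDigits m d) :
    flipDigits m (flipDigits m d) = d := funext fun n => by
  have := hd n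
  unfold flipDigits
  split_ifs <;> omega

variable {G : ℝ → ℝ}

/-- A point `x < y` forces its digits to be lexicographically smaller than those of `y`, so no
separate treatment of the points with two expansions is needed. -/
theorem monotoneOn_of_tailVal (hq : IsDigitDistribution m q) (hp : IsDigitDistribution m p)
    (hG : ∀ c, ValidDigits m c → G (tailVal q c 0) = tailVal p c 0)
    (hrep : ∀ x ∈ Set.Icc (0 : ℝ) 1, ∃ c, ValidDigits m c ∧ tailVal q c 0 = x) :
    MonotoneOn G (Set.Icc 0 1) := by
  intro x hx y hy hxy
  obtain ⟨c, hc, rfl⟩ := hrep x hx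
  obtain ⟨c', hc', rfl⟩ := hrep y hy
  rcases hxy.eq_or_lt with heq | hlt
  · rw [heq]
  by_cases hdiff : ∃ n, 1 ≤ n ∧ c n ≠ c' n
  · obtain ⟨k, hag, hne⟩ := exists_first_ne hdiff
    rcases hne.lt_or_gt with hk | hk
    · rw [hG c hc, hG c' hc']
      exact hp.tailVal_le_tailVal hc hc' hag hk
    · exact absurd (hq.tailVal_le_tailVal hc' hc (fun t ht => (hag t ht).symm) hk) hlt.not_ge
  · push Not at hdiff
    exact absurd (tailVal_congr fun t ht => hdiff t ht) hlt.ne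

theorem surjOn_of_tailVal (hq : IsDigitDistribution m q) (hp : IsDigitDistribution m p)
    (hp4 : HasNullCylinders m p)
    (hG : ∀ c, ValidDigits m c → G (tailVal q c 0) = tailVal p c 0) :
    Set.SurjOn G (Set.Icc 0 1) (Set.Icc 0 1) := fun z hz => by
  obtain ⟨c, hc, rfl⟩ := hp.exists_tailVal_eq hp4 hz
  exact ⟨tailVal q c 0, hq.tailVal_mem_Icc hc 0, hG c hc⟩

def topPad (m : ℕ → ℕ) (N : ℕ) (c : ℕ → ℕ) (j : ℕ) : ℕ := if j ≤ N then c j else m j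

lemma topPad_of_le {N j : ℕ} (h : j ≤ N) : topPad m N c j = c j := if_pos h

lemma validDigits_topPad (hc : ValidDigits m c) (N : ℕ) : ValidDigits m (topPad m N c) :=
  fun j => by
    unfold NegaQ.topPad
    split
    exacts [hc j, le_rfl]

lemma IsDigitDistribution.tailVal_topPad (hf : IsDigitDistribution m f)
    (hf4 : HasNullCylinders m f) (hc : ValidDigits m c) {N : ℕ} (hzero : ∀ t, N < t → c t = 0) :
    tailVal f (topPad m N c) 0 = tailVal f c 0 + ∏ t ∈ Icc 1 N, f t (c t) := by
  have hag : ∀ t ∈ Icc 1 N, topPad m N c t = c t := fun t ht => topPad_of_le (mem_Icc.1 ht).2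
  have h := hf.tailVal_sub_tailVal (validDigits_topPad hc N) hc hag
  rw [hf.tailVal_eq_one hf4 (validDigits_topPad hc N) (k := N) fun t ht => if_neg (by omega),
    tailVal_eq_zero hzero, prod_congr rfl fun t ht => by rw [hag t ht]] at h
  linarith

open Classical in
/-- The digit strings `c₁ … c_N` with `c_n ∈ D n`, padded with zeros. -/
def codes (D : ℕ → Finset ℕ) : ℕ → Finset (ℕ → ℕ)
  | 0 => {0}
  | N + 1 => (codes D N ×ˢ D (N + 1)).image fun ci => Function.update ci.1 (N + 1) ci.2

lemma mem_codes {D : ℕ → Finset ℕ} {N : ℕ} (hc : c ∈ codes D N) :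
    (∀ j, (j = 0 ∨ N < j) → c j = 0) ∧ ∀ j ∈ Icc 1 N, c j ∈ D j := by
  induction N generalizing c with
  | zero =>
    rw [codes, Finset.mem_singleton] at hc
    subst hc
    exact ⟨fun _ _ => rfl, fun j hj => by simp at hj⟩
  | succ N ih =>
    simp only [codes, Finset.mem_image, Finset.mem_product] at hc
    obtain ⟨⟨c₀, i⟩, ⟨hc₀, hi⟩, rfl⟩ := hc
    refine ⟨fun j hj => ?_, fun j hj => ?_⟩
    · rw [Function.update_of_ne (by omega)]
      exact (ih hc₀).1 j (by omega)
    · obtain ⟨hj1, hj2⟩ := mem_Icc.1 hj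
      rcases hj2.eq_or_lt with rfl | hlt
      · simpa using hi
      · rw [Function.update_of_ne (by omega)]
        exact (ih hc₀).2 j (mem_Icc.2 ⟨hj1, by omega⟩)

lemma sum_codes_prod (D : ℕ → Finset ℕ) (g : ℕ → ℕ → ℝ) (N : ℕ) :
    ∑ c ∈ codes D N, ∏ t ∈ Icc 1 N, g t (c t) = ∏ n ∈ Icc 1 N, ∑ i ∈ D n, g n i := by
  classical
  induction N with
  | zero => simp [codes]
  | succ N ih =>
    rw [codes, sum_image, sum_product, prod_Icc_succ_top (by omega), ← ih, sum_mul]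
    · refine sum_congr rfl fun c _ => ?_
      rw [mul_sum]
      refine sum_congr rfl fun i _ => ?_
      rw [prod_Icc_succ_top (by omega), Function.update_self]
      congr 1
      exact prod_congr rfl fun t ht => by
        rw [Function.update_of_ne (by have := (mem_Icc.1 ht).2; omega)]
    · rintro ⟨c₀, i⟩ hci ⟨c₀', i'⟩ hci' heq
      simp only [coe_product, Set.mem_prod, mem_coe] at hci hci'
      have hi : i = i' := by simpa using congrFun heq (N + 1)
      refine Prod.ext (funext fun j => ?_) hi
      rcases eq_or_ne j (N + 1) with rfl | hj
      · change c₀ (N + 1) = c₀' (N + 1)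
        rw [(mem_codes hci.1).1 _ (Or.inr (by omega)), (mem_codes hci'.1).1 _ (Or.inr (by omega))]
      · simpa [Function.update_of_ne hj] using congrFun heq j

def posDigits (m : ℕ → ℕ) (p : ℕ → ℕ → ℝ) (n : ℕ) : Finset ℕ :=
  {i ∈ range (m n + 1) | 0 < p n i}

lemma validDigits_of_mem_codes {N : ℕ} (hc : c ∈ codes (posDigits m p) N) : ValidDigits m c := by
  intro j
  by_cases hj : j ∈ Icc 1 N
  · have := (mem_filter.1 ((mem_codes hc).2 j hj)).1
    have := mem_range.1 this
    omega
  · rw [(mem_codes hc).1 j (by simp at hj; omega)]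
    exact Nat.zero_le _

def cylinder (m : ℕ → ℕ) (f : ℕ → ℕ → ℝ) (N : ℕ) (c : ℕ → ℕ) : Set ℝ :=
  Set.Ioc (tailVal f c 0) (tailVal f (topPad m N c) 0)

lemma IsDigitDistribution.pairwiseDisjoint_cylinder (hq : IsDigitDistribution m q) (N : ℕ) :
    (codes (posDigits m p) N : Set (ℕ → ℕ)).PairwiseDisjoint (cylinder m q N) := by
  have key : ∀ c ∈ codes (posDigits m p) N, ∀ c' ∈ codes (posDigits m p) N, ∀ k,
      (∀ t ∈ Icc 1 k, c t = c' t) → c (k + 1) < c' (k + 1) →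
      Disjoint (cylinder m q N c) (cylinder m q N c') := by
    intro c hc c' hc' k hag hlt
    have hkN : k + 1 ≤ N := by
      by_contra hN
      rw [(mem_codes hc').1 _ (Or.inr (by omega))] at hlt
      exact Nat.not_lt_zero _ hlt
    refine Set.Ioc_disjoint_Ioc_of_le (hq.tailVal_le_tailVal
      (validDigits_topPad (validDigits_of_mem_codes hc) N) (validDigits_of_mem_codes hc') (k := k)
      (fun t ht => (topPad_of_le (by have := (mem_Icc.1 ht).2; omega)).trans (hag t ht)) ?_)
    rwa [topPad_of_le hkN]
  intro c hc c' hc' hne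
  have hdiff : ∃ n, 1 ≤ n ∧ c n ≠ c' n := by
    by_contra! h
    refine hne (funext fun j => ?_)
    rcases Nat.eq_zero_or_pos j with rfl | hj
    · rw [(mem_codes hc).1 0 (Or.inl rfl), (mem_codes hc').1 0 (Or.inl rfl)]
    · exact h j hj
  obtain ⟨k, hag, hk⟩ := exists_first_ne hdiff
  rcases hk.lt_or_gt with hlt | hgt
  · exact key c hc c' hc' k hag hlt
  · exact (key c' hc' c hc k (fun t ht => (hag t ht).symm) hgt).symm

lemma sum_range_tw (φ : ℝ → ℝ → ℝ) (n : ℕ) :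
    ∑ i ∈ range (m n + 1), φ (tw m p n i) (tw m q n i) =
      ∑ i ∈ range (m n + 1), φ (p n i) (q n i) := by
  unfold tw
  split_ifs
  · rfl
  · simpa using sum_range_reflect (fun i => φ (p n i) (q n i)) (m n + 1)

lemma IsDigitDistribution.tendsto_prod_sum_posDigits (hq : IsDigitDistribution m q)
    (hp0 : ∀ n i, i ≤ m n → 0 ≤ p n i)
    (hsing : Tendsto (fun N => ∏ n ∈ Icc 1 N,
        ∑ i ∈ range (m n + 1), if 0 < tw m p n i then tw m q n i else 0) atTop (𝓝 0) ∨
      ¬Summable (fun n : ℕ => ∑ i ∈ range (m (n + 1) + 1),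
        if tw m p (n + 1) i = 0 then tw m q (n + 1) i else 0)) :
    Tendsto (fun N => ∏ n ∈ Icc 1 N, ∑ i ∈ posDigits m p n, q n i) atTop (𝓝 0) := by
  have hpos := sum_range_tw (m := m) (p := p) (q := q) fun a b => if 0 < a then b else 0
  have hzero := sum_range_tw (m := m) (p := p) (q := q) fun a b => if a = 0 then b else 0
  simp only [hpos, hzero] at hsing
  simp only [posDigits, sum_filter]
  refine hsing.elim id (tendsto_prod_Icc_zero_of_not_summable
    (b := fun n => ∑ i ∈ range (m n + 1), if p n i = 0 then q n i else 0)
    (fun n => sum_nonneg fun i hi => ?_) (fun n => sum_nonneg fun i hi => ?_) (fun n => ?_))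
  · split_ifs
    exacts [hq.nonneg n i (by have := mem_range.1 hi; omega), le_rfl]
  · split_ifs
    exacts [hq.nonneg n i (by have := mem_range.1 hi; omega), le_rfl]
  · rw [← sum_add_distrib, ← hq.sum_eq_one n]
    refine sum_congr rfl fun i hi => ?_
    rcases (hp0 n i (by have := mem_range.1 hi; omega)).lt_or_eq with h | h
    · simp [h, h.ne']
    · simp [← h]

lemma IsDigitDistribution.sum_posDigits (hp : IsDigitDistribution m p) (n : ℕ) :
    ∑ i ∈ posDigits m p n, p n i = 1 := by
  rw [posDigits, sum_filter_of_ne fun i hi hne =>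
    lt_of_le_of_ne (hp.nonneg n i (by have := mem_range.1 hi; omega)) hne.symm, hp.sum_eq_one]

lemma IsDigitDistribution.volume_cylinder {N : ℕ} (hf : IsDigitDistribution m f)
    (hf4 : HasNullCylinders m f) (hc : ValidDigits m c) (hzero : ∀ t, N < t → c t = 0) :
    volume (cylinder m f N c) = ENNReal.ofReal (∏ t ∈ Icc 1 N, f t (c t)) := by
  rw [cylinder, Real.volume_Ioc, hf.tailVal_topPad hf4 hc hzero, add_sub_cancel_left]

lemma IsDigitDistribution.measure_cylinder {N : ℕ} (hp : IsDigitDistribution m p)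
    (hp4 : HasNullCylinders m p) {F : StieltjesFunction ℝ}
    (hF : ∀ c, ValidDigits m c → F (tailVal q c 0) = tailVal p c 0) (hc : ValidDigits m c)
    (hzero : ∀ t, N < t → c t = 0) :
    F.measure (cylinder m q N c) = ENNReal.ofReal (∏ t ∈ Icc 1 N, p t (c t)) := by
  rw [cylinder, F.measure_Ioc, hF _ (validDigits_topPad hc N), hF c hc,
    hp.tailVal_topPad hp4 hc hzero, add_sub_cancel_left]

theorem measure_mutuallySingular_volume (hq : IsDigitDistribution m q)
    (hq4 : HasNullCylinders m q) (hp : IsDigitDistribution m p) (hp4 : HasNullCylinders m p)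
    (F : StieltjesFunction ℝ) (hF : ∀ c, ValidDigits m c → F (tailVal q c 0) = tailVal p c 0)
    (hFuniv : F.measure Set.univ ≤ 1)
    (hsing : Tendsto (fun N => ∏ n ∈ Icc 1 N, ∑ i ∈ posDigits m p n, q n i) atTop (𝓝 0)) :
    F.measure ⟂ₘ volume := by
  set U : ℕ → Set ℝ := fun N => ⋃ c ∈ codes (posDigits m p) N, cylinder m q N c
  have hU : ∀ N, MeasurableSet (U N) := fun N =>
    Finset.measurableSet_biUnion _ fun _ _ => measurableSet_Ioc
  have hzero : ∀ {N c}, c ∈ codes (posDigits m p) N → ∀ t, N < t → c t = 0 :=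
    fun hc t ht => (mem_codes hc).1 t (Or.inr ht)
  refine mutuallySingular_of_forall_measure_compl_eq_zero hU (fun N => ?_) ?_
  · have hmass : F.measure (U N) = 1 := by
      rw [measure_biUnion_finset (hq.pairwiseDisjoint_cylinder N) fun _ _ => measurableSet_Ioc,
        sum_congr rfl fun c hc =>
          hp.measure_cylinder hp4 hF (validDigits_of_mem_codes hc) (hzero hc),
        ← ENNReal.ofReal_sum_of_nonneg fun c hc => hp.prod_nonneg (validDigits_of_mem_codes hc) _,
        sum_codes_prod, prod_congr rfl fun n _ => hp.sum_posDigits n, prod_const_one,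
        ENNReal.ofReal_one]
    rw [measure_compl (hU N) (by simp [hmass]), hmass]
    exact tsub_eq_zero_of_le hFuniv
  · have hvol : ∀ N, volume (U N) ≤
        ENNReal.ofReal (∏ n ∈ Icc 1 N, ∑ i ∈ posDigits m p n, q n i) := fun N =>
      calc volume (U N) ≤ ∑ c ∈ codes (posDigits m p) N, volume (cylinder m q N c) :=
            measure_biUnion_finset_le _ _
        _ = ∑ c ∈ codes (posDigits m p) N, ENNReal.ofReal (∏ t ∈ Icc 1 N, q t (c t)) :=
            sum_congr rfl fun c hc =>
              hq.volume_cylinder hq4 (validDigits_of_mem_codes hc) (hzero hc)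
        _ = ENNReal.ofReal (∏ n ∈ Icc 1 N, ∑ i ∈ posDigits m p n, q n i) := by
            rw [← ENNReal.ofReal_sum_of_nonneg fun c hc =>
              hq.prod_nonneg (validDigits_of_mem_codes hc) _, sum_codes_prod]
    refine tendsto_of_tendsto_of_tendsto_of_le_of_le tendsto_const_nhds ?_ (fun _ => zero_le) hvol
    simpa using ENNReal.tendsto_ofReal hsing

end NegaQ

open NegaQ

theorem stmt13_general (m : ℕ → ℕ) (q p : ℕ → ℕ → ℝ)
    (hq1 : ∀ n i, i ≤ m n → 0 < q n i)
    (hq2 : ∀ n, ∑ i ∈ Finset.range (m n + 1), q n i = 1)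
    (hq4 : ∀ d, ValidDigits m d →
      Tendsto (fun N => ∏ j ∈ Finset.Icc 1 N, q j (d j)) atTop (𝓝 0))
    (hp0 : ∀ n i, i ≤ m n → 0 ≤ p n i)
    (hp2 : ∀ n, ∑ i ∈ Finset.range (m n + 1), p n i = 1)
    (hp4 : ∀ d, ValidDigits m d →
      Tendsto (fun N => ∏ j ∈ Finset.Icc 1 N, p j (d j)) atTop (𝓝 0))
    (G : ℝ → ℝ)
    (hG : ∀ d, ValidDigits m d → G (negaVal m q d) = negaVal m p d)
    (hsurj : ∀ x ∈ Set.Icc (0 : ℝ) 1, ∃ d, ValidDigits m d ∧ x = negaVal m q d)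
    (hsing :
      Tendsto (fun N => ∏ n ∈ Finset.Icc 1 N,
        ∑ i ∈ Finset.range (m n + 1), if 0 < tw m p n i then tw m q n i else 0)
        atTop (𝓝 0) ∨
      ¬ Summable (fun n : ℕ =>
        ∑ i ∈ Finset.range (m (n + 1) + 1),
          if tw m p (n + 1) i = 0 then tw m q (n + 1) i else 0)) :
    ContinuousOn G (Set.Icc (0 : ℝ) 1) ∧ MonotoneOn G (Set.Icc (0 : ℝ) 1) ∧
      ∀ᵐ x ∂(volume.restrict (Set.Icc (0 : ℝ) 1)), HasDerivAt G 0 x := by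
  have hq : IsDigitDistribution m q := ⟨fun n i hi => (hq1 n i hi).le, hq2⟩
  have hp : IsDigitDistribution m p := ⟨hp0, hp2⟩
  have hG' : ∀ c, ValidDigits m c → G (tailVal q c 0) = tailVal p c 0 := fun c hc => by
    simpa only [negaVal_eq_tailVal, flipDigits_flipDigits hc] using
      hG _ (validDigits_flipDigits hc)
  have hrep : ∀ x ∈ Set.Icc (0 : ℝ) 1, ∃ c, ValidDigits m c ∧ tailVal q c 0 = x := fun x hx => by
    obtain ⟨d, hd, rfl⟩ := hsurj x hx
    exact ⟨_, validDigits_flipDigits hd, (negaVal_eq_tailVal d).symm⟩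
  have hG0 : G 0 = 0 := by
    simpa only [tailVal_eq_zero (f := q) (c := 0) (k := 0) fun _ _ => rfl,
      tailVal_eq_zero (f := p) (c := 0) (k := 0) fun _ _ => rfl] using hG' 0 fun _ => Nat.zero_le _
  have hG1 : G 1 = 1 := by
    simpa only [hq.tailVal_eq_one hq4 (fun _ => le_rfl) fun _ _ => rfl,
      hp.tailVal_eq_one hp4 (fun _ => le_rfl) fun _ _ => rfl] using hG' m fun _ => le_rfl
  have hmono := monotoneOn_of_tailVal hq hp hG' hrep
  have hcont := continuous_IccExtend_of_monotoneOn_of_surjOn zero_le_one hmono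
    (by simpa only [hG0, hG1] using surjOn_of_tailVal hq hp hp4 hG')
  refine ⟨continuousOn_iff_continuous_domRestrict.2 (continuous_IccExtend_iff.1 hcont), hmono,
    ae_hasDerivAt_zero_of_mutuallySingular zero_le_one hmono hcont ?_⟩
  refine measure_mutuallySingular_volume hq hq4 hp hp4 _ (fun c hc => ?_) ?_
    (hq.tendsto_prod_sum_posDigits hp0 hsing)
  · rw [IccStieltjes_apply_of_mem _ _ _ (hq.tailVal_mem_Icc hc 0), hG' c hc]
  · simp [measure_univ_IccStieltjes, hG0, hG1]

/-- sufficient conditions for `F` to be a singular (Cantor-type)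
distribution function: continuous, nondecreasing, with derivative `0` almost everywhere. -/
theorem stmt13 (m : ℕ → ℕ) (q p : ℕ → ℕ → ℝ)
    (hq1 : ∀ n i, i ≤ m n → 0 < q n i)
    (hq2 : ∀ n, ∑ i ∈ Finset.range (m n + 1), q n i = 1)
    (hq4 : ∀ d, ValidDigits m d →
      Tendsto (fun N => ∏ j ∈ Finset.Icc 1 N, q j (d j)) atTop (𝓝 0))
    (hp0 : ∀ n i, i ≤ m n → 0 ≤ p n i)
    (hp1 : ∀ n i, i ≤ m n → p n i < 1)
    (hp2 : ∀ n, ∑ i ∈ Finset.range (m n + 1), p n i = 1)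
    (hp3 : ∀ n k, 1 ≤ k → k ≤ m n → rowSum p n k ∈ Set.Ioo (0 : ℝ) 1)
    (hp4 : ∀ d, ValidDigits m d →
      Tendsto (fun N => ∏ j ∈ Finset.Icc 1 N, p j (d j)) atTop (𝓝 0))
    (G : ℝ → ℝ)
    (hG : ∀ d, ValidDigits m d → G (negaVal m q d) = negaVal m p d)
    (hsurj : ∀ x ∈ Set.Icc (0 : ℝ) 1, ∃ d, ValidDigits m d ∧ x = negaVal m q d)
    (hsing :
      Tendsto (fun N => ∏ n ∈ Finset.Icc 1 N,
        ∑ i ∈ Finset.range (m n + 1), if 0 < tw m p n i then tw m q n i else 0)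
        atTop (𝓝 0) ∨
      ¬ Summable (fun n : ℕ =>
        ∑ i ∈ Finset.range (m (n + 1) + 1),
          if tw m p (n + 1) i = 0 then tw m q (n + 1) i else 0)) :
    ContinuousOn G (Set.Icc (0 : ℝ) 1) ∧ MonotoneOn G (Set.Icc (0 : ℝ) 1) ∧
      ∀ᵐ x ∂(volume.restrict (Set.Icc (0 : ℝ) 1)), HasDerivAt G 0 x :=
  stmt13_general m q p hq1 hq2 hq4 hp0 hp2 hp4 G hG hsurj hsing
end
end
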